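/- Let F = (A, C) be a finite AAF and l a labelling with no argument labelled out, and let ψ : A → ℤ be a ranking function for (F,l). Define f_ψ : C → {0,1} by f_ψ((u,v)) = 0 if ψ(u) > ψ(v) and f_ψ((u,v)) = 1 otherwise. Then f_ψ is a preference function over F and l is a complete labelling of the fPSG (A, f_ψ⁻¹(1)). -/
import Mathlib


/-- The three labels of a labelling: `inn` (in), `out`, `undec`. -/
inductive Label where
  | inn : Label
  | out : Label
  | undec : Label
deriving DecidableEq

/-- Undirected connectivity: reachability in the symmetric closure of `C`.
`Conn C a b` holds iff `a` and `b` are joined by an undirected path, i.e.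
they lie in the same connected component of `(A, C)`. -/
def Conn {A : Type*} (C : A → A → Prop) : A → A → Prop :=
  Relation.ReflTransGen (fun x y => C x y ∨ C y x)

/-- A CC-wise total order on the AAF `(A, C)`: a reflexive transitive relation
whose restriction to each connected component is total. -/
structure CCOrder {A : Type*} (C : A → A → Prop) where
  le : A → A → Prop
  refl : ∀ a, le a a
  trans : ∀ a b c, le a b → le b c → le a c
  total : ∀ a b, Conn C a b → le a b ∨ le b a

/-- Strict part: `a ≺ b` iff `a ≼ b` and not `b ≼ a`. -/
def CCOrder.lt {A : Type*} {C : A → A → Prop} (r : CCOrder C) (a b : A) : Prop :=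
  r.le a b ∧ ¬ r.le b a

/-- Reduction 1: `C₁ = {(a,b) | ((a,b) ∈ C ∧ b ≼ a) ∨ ((b,a) ∈ C ∧ b ≺ a)}`. -/
def red1 {A : Type*} (C : A → A → Prop) (r : CCOrder C) (a b : A) : Prop :=
  (C a b ∧ r.le b a) ∨ (C b a ∧ r.lt b a)

/-- Reduction 2: `C₂ = {(a,b) ∈ C | b ≼ a ∨ (b,a) ∉ C}`. -/
def red2 {A : Type*} (C : A → A → Prop) (r : CCOrder C) (a b : A) : Prop :=
  C a b ∧ (r.le b a ∨ ¬ C b a)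

/-- Reduction 3: `C₁ ∪ C₂`. -/
def red3 {A : Type*} (C : A → A → Prop) (r : CCOrder C) (a b : A) : Prop :=
  red1 C r a b ∨ red2 C r a b

/-- Reduction 4: `C₄ = {(a,b) ∈ C | b ≼ a}`. -/
def red4 {A : Type*} (C : A → A → Prop) (r : CCOrder C) (a b : A) : Prop :=
  C a b ∧ r.le b a

/-- `l` is a complete labelling of the attack relation `C`:
`l a = in` iff all attackers of `a` are `out`, and
`l a = out` iff some attacker of `a` is `in` (and `undec` otherwise,
which is automatic for a three-valued labelling). -/
def CompleteLabelling {A : Type*} (C : A → A → Prop) (l : A → Label) : Prop :=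
  ∀ a, (l a = Label.inn ↔ ∀ b, C b a → l b = Label.out) ∧
       (l a = Label.out ↔ ∃ b, C b a ∧ l b = Label.inn)

/-- `(a,b) ∈ F₁`: an attack of `C` assigned value 1 by `f`. -/
def inF1 {A : Type*} (C : A → A → Prop) (f : A → A → Bool) (a b : A) : Prop :=
  C a b ∧ f a b = true

/-- `(a,b) ∈ F₀`: an attack of `C` assigned value 0 by `f`. -/
def inF0 {A : Type*} (C : A → A → Prop) (f : A → A → Bool) (a b : A) : Prop :=
  C a b ∧ f a b = false

/-- The relation `conv(F₀) ∪ F₁`. -/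
def Drel {A : Type*} (C : A → A → Prop) (f : A → A → Bool) (a b : A) : Prop :=
  inF0 C f b a ∨ inF1 C f a b

/-- The relation `F₁ \ conv(F₀)`. -/
def Erel {A : Type*} (C : A → A → Prop) (f : A → A → Bool) (a b : A) : Prop :=
  inF1 C f a b ∧ ¬ inF0 C f b a

/-- `f` is a preference function over `(A, C)`: every directed cycle of
`conv(F₀) ∪ F₁` is entirely contained in `F₁ \ conv(F₀)`.  Equivalently
(edge-wise): every edge of `conv(F₀) ∪ F₁` lying on a directed cycle
(i.e. admitting a return path) belongs to `F₁ \ conv(F₀)`. -/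
def IsPrefFun {A : Type*} (C : A → A → Prop) (f : A → A → Bool) : Prop :=
  ∀ a b, Drel C f a b → Relation.ReflTransGen (Drel C f) b a → Erel C f a b

/-- A ranking function for `(F, l)` (assuming no argument is labelled `out`):
(1) every attack touching an `in`-labelled argument strictly decreases rank, and
(2) every `undec` argument has an `undec` attacker of rank at most its own. -/
def IsRanking {A : Type*} (C : A → A → Prop) (l : A → Label) (ψ : A → ℤ) : Prop :=
  (∀ u v, C u v → (l u = Label.inn ∨ l v = Label.inn) → ψ u > ψ v) ∧
  (∀ u, l u = Label.undec → ∃ v, C v u ∧ l v = Label.undec ∧ ψ v ≤ ψ u)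
/-- from a ranking function `ψ` (with no `out`-labelled argument),
the function `f_ψ` (0 on rank-decreasing attacks, 1 otherwise) is a preference
function whose fPSG admits `l` as a complete labelling. -/
theorem stmt10 {A : Type*} [Fintype A] (C : A → A → Prop) (l : A → Label)
    (hno : ∀ a, l a ≠ Label.out)
    (ψ : A → ℤ) (hψ : IsRanking C l ψ) :
    IsPrefFun C (fun u v => if ψ v < ψ u then false else true) ∧
    CompleteLabelling (inF1 C (fun u v => if ψ v < ψ u then false else true)) l := by
  set f : A → A → Bool := fun u v => if ψ v < ψ u then false else true with hf
  have hF0 : ∀ a b, inF0 C f a b ↔ C a b ∧ ψ b < ψ a := by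
    intro a b
    simp [inF0, hf]
  have hF1 : ∀ a b, inF1 C f a b ↔ C a b ∧ ψ a ≤ ψ b := by
    intro a b
    simp [inF1, hf, not_lt]
  have hD : ∀ a b, Drel C f a b → ψ a ≤ ψ b := by
    intro a b h
    rcases h with h | h
    · exact le_of_lt ((hF0 b a).1 h).2
    · exact ((hF1 a b).1 h).2
  have hRT : ∀ a b, Relation.ReflTransGen (Drel C f) a b → ψ a ≤ ψ b := by
    intro a b h
    induction h with
    | refl => exact le_refl _
    | tail _ h ih => exact le_trans ih (hD _ _ h)
  constructor
  · intro a b hab hba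
    have h1 : ψ a ≤ ψ b := hD a b hab
    have h2 : ψ b ≤ ψ a := hRT b a hba
    have heq : ψ a = ψ b := le_antisymm h1 h2
    constructor
    · rcases hab with h | h
      · exact absurd ((hF0 b a).1 h).2 (by omega)
      · exact h
    · intro h
      exact absurd ((hF0 b a).1 h).2 (by omega)
  · intro a
    constructor
    · constructor
      · intro ha b hb
        rw [hF1] at hb
        have := hψ.1 b a hb.1 (Or.inr ha)
        omega
      · intro h
        cases hla : l a with
        | inn => rfl
        | out => exact absurd hla (hno a)
        | undec =>
          obtain ⟨v, hv, hlv, hle⟩ := hψ.2 a hla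
          have := h v ((hF1 v a).2 ⟨hv, hle⟩)
          rw [hlv] at this
          exact absurd this (by simp)
    · constructor
      · intro h
        exact absurd h (hno a)
      · rintro ⟨b, hb, hlb⟩
        rw [hF1] at hb
        have := hψ.1 b a hb.1 (Or.inl hlb)
        omega
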